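/- arXiv:0810.3969 — 5 statements merged into one kernel-verified Lean document; each statement's English description precedes it below -/
import Mathlib

section
/- Let R be a commutative noetherian ring and M an R-module. Then M is a finitely generated R-module if and only if the following two conditions hold: (1) the localization M_m is a finitely generated R_m-module for every maximal ideal m of R, and (2) for every finitely generated submodule N of M, the set of minimal primes of the support of M/N is finite. -/
universe u

/-- `Min_R(X)`: the set of minimal primes of the support of the module `X`. -/
def minSupport (R : Type u) [CommRing R] (X : Type u) [AddCommGroup X] [Module R X] :
    Set (PrimeSpectrum R) :=
  {p | p ∈ Module.support R X ∧ ∀ q ∈ Module.support R X, q ≤ p → q = p}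

/-!
Below a prime `p` with `X_p` finite over `R_p`, the support of `X` is the zero locus of
`Ann_R(X_p)`, so every point of `Supp X` below a maximal ideal specializes from a minimal one.
Finitely many minimal points then make `Supp(M ⧸ N)` closed for every finitely generated `N`,
and since `Spec R` is noetherian some finitely generated `N₀` has minimal such support. A maximal
ideal `m` in it could be removed by adding to `N₀` finitely many elements generating `M_m`, so
`Supp(M ⧸ N₀)` is empty and `M = N₀`.
-/

open Module PrimeSpectrum

section Support

variable {R : Type*} [CommRing R] {X : Type*} [AddCommGroup X] [Module R X]

lemma Module.support_localizedModule_subset (S : Submonoid R) :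
    support R (LocalizedModule S X) ⊆ support R X := by
  intro q hq
  obtain ⟨y, hy⟩ := mem_support_iff'.mp hq
  induction y using LocalizedModule.induction_on with
  | h x s =>
    refine mem_support_iff'.mpr ⟨x, fun r hr hrx => hy r hr ?_⟩
    rw [LocalizedModule.smul'_mk, hrx, LocalizedModule.zero_mk]

lemma Module.mem_support_localizedModule_of_le {p : Ideal R} [p.IsPrime] {q : PrimeSpectrum R}
    (hq : q ∈ support R X) (hqp : q.asIdeal ≤ p) :
    q ∈ support R (LocalizedModule p.primeCompl X) := by
  obtain ⟨x, hx⟩ := mem_support_iff'.mp hq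
  refine mem_support_iff'.mpr ⟨LocalizedModule.mk x 1, fun r hr hrx => ?_⟩
  rw [LocalizedModule.smul'_mk, ← LocalizedModule.zero_mk 1, LocalizedModule.mk_eq] at hrx
  obtain ⟨u, hu⟩ := hrx
  refine hx (u * r) (q.2.mul_notMem (fun hu' => u.2 (hqp hu')) hr) ?_
  simpa [mul_smul, Submonoid.smul_def] using hu

lemma Module.mem_support_localizedModule_of_annihilator_le {p : Ideal R} [p.IsPrime]
    [Module.Finite (Localization.AtPrime p) (LocalizedModule p.primeCompl X)]
    {q : PrimeSpectrum R} (hqp : q.asIdeal ≤ p)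
    (hann : annihilator R (LocalizedModule p.primeCompl X) ≤ q.asIdeal) :
    q ∈ support R (LocalizedModule p.primeCompl X) := by
  let Q : PrimeSpectrum (Localization.AtPrime p) :=
    ⟨q.asIdeal.map (algebraMap R _), Ideal.isPrime_map_of_isLocalizationAtPrime p hqp⟩
  have hQ : Q ∈ support (Localization.AtPrime p) (LocalizedModule p.primeCompl X) := by
    rw [mem_support_iff_of_finite, ← IsLocalization.map_under p.primeCompl _
      (annihilator _ _), Ideal.under, comap_annihilator]
    exact Ideal.map_mono hann
  have hQq : comap (algebraMap R _) Q = q :=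
    PrimeSpectrum.ext (Ideal.under_map_of_isLocalizationAtPrime p hqp)
  simpa [hQq] using support_subset_preimage_comap (R := R) hQ

end Support

section MinSupport

variable {R : Type u} [CommRing R] {X : Type u} [AddCommGroup X] [Module R X]

lemma exists_mem_minSupport_le {p : Ideal R} [p.IsPrime]
    [Module.Finite (Localization.AtPrime p) (LocalizedModule p.primeCompl X)]
    {q : PrimeSpectrum R} (hq : q ∈ support R X) (hqp : q.asIdeal ≤ p) :
    ∃ p' ∈ minSupport R X, p' ≤ q := by
  set I := annihilator R (LocalizedModule p.primeCompl X)
  have hsupp (q' : PrimeSpectrum R) (hq'p : q'.asIdeal ≤ p) :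
      q' ∈ support R X ↔ I ≤ q'.asIdeal :=
    ⟨fun h => annihilator_le_of_mem_support (mem_support_localizedModule_of_le h hq'p),
      fun h => support_localizedModule_subset _
        (mem_support_localizedModule_of_annihilator_le hq'p h)⟩
  obtain ⟨P, hP, hPq⟩ := Ideal.exists_minimalPrimes_le ((hsupp q hqp).mp hq)
  have hPp : P ≤ p := hPq.trans hqp
  refine ⟨⟨P, hP.1.1⟩, ⟨(hsupp ⟨P, hP.1.1⟩ hPp).mpr hP.1.2, fun q' hq' hq'P => ?_⟩, hPq⟩
  replace hq'P : q'.asIdeal ≤ P := hq'P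
  exact PrimeSpectrum.ext
    (le_antisymm hq'P (hP.2 ⟨q'.2, (hsupp q' (hq'P.trans hPp)).mp hq'⟩ hq'P))

lemma isClosed_support_of_minSupport_finite (hfin : (minSupport R X).Finite)
    (hmin : ∀ q ∈ support R X, ∃ p ∈ minSupport R X, p ≤ q) :
    IsClosed (support R X) := by
  have hunion : support R X = ⋃ p ∈ minSupport R X, zeroLocus p.asIdeal := by
    ext q
    simp only [Set.mem_iUnion, mem_zeroLocus, SetLike.coe_subset_coe, exists_prop]
    exact ⟨hmin q, fun ⟨p, hp, hpq⟩ => mem_support_mono hpq hp.1⟩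
  rw [hunion]
  exact hfin.isClosed_biUnion fun p _ => isClosed_zeroLocus _

lemma isClosed_support_of_localizations_finite
    (hloc : ∀ (m : Ideal R) [m.IsMaximal],
      Module.Finite (Localization.AtPrime m) (LocalizedModule m.primeCompl X))
    (hfin : (minSupport R X).Finite) :
    IsClosed (support R X) := by
  refine isClosed_support_of_minSupport_finite hfin fun q hq => ?_
  obtain ⟨m, hm, hqm⟩ := q.asIdeal.exists_le_maximal q.2.ne_top
  exact exists_mem_minSupport_le hq hqm

lemma finite_minSupport [IsNoetherianRing R] [Module.Finite R X] : (minSupport R X).Finite := by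
  refine ((annihilator R X).finite_minimalPrimes_of_isNoetherianRing.preimage
    (fun _ _ _ _ h => PrimeSpectrum.ext h)).subset ?_
  rintro p ⟨hp, hmin⟩
  refine ⟨⟨p.2, annihilator_le_of_mem_support hp⟩, fun J ⟨hJ, hJann⟩ hJp => ?_⟩
  exact (congrArg asIdeal (hmin ⟨J, hJ⟩ (mem_support_iff_of_finite.mpr hJann) hJp)).ge

end MinSupport

section Quotient

variable {R : Type*} [CommRing R] {M : Type*} [AddCommGroup M] [Module R M]

lemma Module.support_quotient_anti {N N' : Submodule R M} (h : N ≤ N') :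
    support R (M ⧸ N') ⊆ support R (M ⧸ N) :=
  support_subset_of_surjective _ (Submodule.factor_surjective h)

lemma exists_fg_notMem_support_quotient (p : PrimeSpectrum R)
    [Module.Finite (Localization.AtPrime p.asIdeal) (LocalizedModule p.asIdeal.primeCompl M)] :
    ∃ N : Submodule R M, N.FG ∧ p ∉ support R (M ⧸ N) := by
  classical
  obtain ⟨s, hs⟩ := Module.Finite.fg_top (R := Localization.AtPrime p.asIdeal)
    (M := LocalizedModule p.asIdeal.primeCompl M)
  let f := LocalizedModule.mkLinearMap p.asIdeal.primeCompl M
  refine ⟨Submodule.span R (IsLocalizedModule.finsetIntegerMultiple p.asIdeal.primeCompl f s),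
    Submodule.fg_span (Finset.finite_toSet _), notMem_support_iff'.mpr fun y => ?_⟩
  obtain ⟨x, rfl⟩ := Submodule.Quotient.mk_surjective _ y
  obtain ⟨t, ht⟩ := multiple_mem_span_of_mem_localization_span p.asIdeal.primeCompl
    (Localization.AtPrime p.asIdeal) (s : Set _) (f x) (by rw [hs]; trivial)
  rw [Submonoid.smul_def, ← map_smul] at ht
  obtain ⟨t', ht'⟩ := IsLocalizedModule.smul_mem_finsetIntegerMultiple_span
    p.asIdeal.primeCompl f (t • x) s ht
  refine ⟨t' * t, p.asIdeal.primeCompl.mul_mem t'.2 t.2, ?_⟩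
  rw [← Submodule.Quotient.mk_smul, Submodule.Quotient.mk_eq_zero, mul_smul]
  simpa [Submonoid.smul_def] using ht'

lemma Module.Finite.of_isClosed_support_quotient [TopologicalSpace.NoetherianSpace (PrimeSpectrum R)]
    (hclosed : ∀ N : Submodule R M, N.FG → IsClosed (support R (M ⧸ N)))
    (hmax : ∀ m : PrimeSpectrum R, m.asIdeal.IsMaximal →
      ∃ N : Submodule R M, N.FG ∧ m ∉ support R (M ⧸ N)) :
    Module.Finite R M := by
  let supp (N : {N : Submodule R M // N.FG}) : TopologicalSpace.Closeds (PrimeSpectrum R) :=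
    ⟨support R (M ⧸ N.1), hclosed N.1 N.2⟩
  obtain ⟨⟨N₀, hN₀⟩, -, hN₀min⟩ :=
    (InvImage.wf supp wellFounded_lt).has_min Set.univ ⟨⟨⊥, Submodule.fg_bot⟩, trivial⟩
  have hempty : support R (M ⧸ N₀) = ∅ := by
    refine Set.eq_empty_of_forall_notMem fun q hq => ?_
    obtain ⟨m, hm, hqm⟩ := q.asIdeal.exists_le_maximal q.2.ne_top
    obtain ⟨N₁, hN₁, hm₁⟩ := hmax ⟨m, hm.isPrime⟩ hm
    have hm₀ : (⟨m, hm.isPrime⟩ : PrimeSpectrum R) ∈ support R (M ⧸ N₀) :=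
      mem_support_mono hqm hq
    refine hN₀min ⟨N₀ ⊔ N₁, hN₀.sup hN₁⟩ trivial ((Set.ssubset_iff_of_subset
      (support_quotient_anti le_sup_left)).mpr ⟨_, hm₀, fun h => hm₁ ?_⟩)
    exact support_quotient_anti le_sup_right h
  have htop : N₀ = ⊤ :=
    Submodule.Quotient.subsingleton_iff.mp (support_eq_empty_iff.mp hempty)
  exact ⟨htop ▸ hN₀⟩

end Quotient

/-- Over a noetherian ring `R`, a module `M` is finitely generated if and only if
`M_m` is a finitely generated `R_m`-module for every maximal ideal `m` and for every
finitely generated submodule `N ⊆ M` the set of minimal primes of the support of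
`M/N` is finite. -/
theorem finite_iff_localizations_finite_and_min_finite
    (R : Type u) [CommRing R] [IsNoetherianRing R]
    (M : Type u) [AddCommGroup M] [Module R M] :
    Module.Finite R M ↔
      ((∀ (m : Ideal R) [m.IsMaximal],
          Module.Finite (Localization.AtPrime m) (LocalizedModule m.primeCompl M)) ∧
        ∀ N : Submodule R M, N.FG → (minSupport R (M ⧸ N)).Finite) := by
  constructor
  · intro _
    exact ⟨fun m _ => Module.Finite.of_isLocalizedModule m.primeCompl
      (LocalizedModule.mkLinearMap m.primeCompl M), fun N _ => finite_minSupport⟩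
  · rintro ⟨hloc, hmin⟩
    have hloc_quot (N : Submodule R M) (m : Ideal R) [m.IsMaximal] :
        Module.Finite (Localization.AtPrime m) (LocalizedModule m.primeCompl (M ⧸ N)) :=
      Module.Finite.of_surjective _ (LocalizedModule.map_surjective _ N.mkQ N.mkQ_surjective)
    refine Module.Finite.of_isClosed_support_quotient
      (fun N hN => isClosed_support_of_localizations_finite (hloc_quot N) (hmin N hN))
      fun m hm => ?_
    have := hloc m.asIdeal
    exact exists_fg_notMem_support_quotient m
end

section
/- Let R be a commutative noetherian ring and let 0 → M' → M → M'' → 0 be a short exact sequence of R-modules. If M' and M'' both belong to the class Z, then M belongs to the class Z. -/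
/-!
For a chain `N i` in `M`, pull it back along `f` and push it forward along `g`. On each step the
exact sequence `M' → M → M''` induces a short exact sequence of subquotients
`f⁻¹(N i) / f⁻¹(N (i+1)) → N i / N (i+1) → g(N i) / g(N (i+1))`, so the support of the middle
term is the union of the supports of the outer ones, and from some index on both consist of
maximal ideals.
-/

universe u

/-- An `R`-module `M` belongs to the class `Z` if for every descending chain
`N 0 ⊇ N 1 ⊇ N 2 ⊇ ...` of submodules of `M` there is an index `n` such that for all
`i ≥ n` every prime in the support of `N i / N (i+1)` is a maximal ideal. -/
def InClassZ (R : Type u) [CommRing R] (M : Type u) [AddCommGroup M] [Module R M] : Prop :=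
  ∀ N : ℕ → Submodule R M, (∀ i, N (i + 1) ≤ N i) →
    ∃ n : ℕ, ∀ i ≥ n,
      ∀ p ∈ Module.support R (↥(N i) ⧸ (N (i + 1)).comap (N i).subtype),
        p.asIdeal.IsMaximal

open Submodule

variable {R : Type*} [CommRing R] {M' M M'' : Type*} [AddCommGroup M'] [Module R M']
  [AddCommGroup M] [Module R M] [AddCommGroup M''] [Module R M'']
  {f : M' →ₗ[R] M} {g : M →ₗ[R] M''}

theorem Function.Exact.restrict_comap_map (hfg : Function.Exact f g) (N : Submodule R M) :
    Function.Exact (f.restrict (p := N.comap f) (q := N) fun _ hx => hx)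
      (g.restrict (p := N) (q := N.map g) fun _ hx => mem_map_of_mem hx) := by
  intro y
  constructor
  · intro hy
    obtain ⟨x, hx⟩ := (hfg y).1 (congrArg Subtype.val hy)
    exact ⟨⟨x, show f x ∈ N from hx ▸ y.2⟩, Subtype.ext hx⟩
  · rintro ⟨x, rfl⟩
    exact Subtype.ext (hfg.apply_apply_eq_zero x)

theorem Module.support_subquotient_of_exact (hfg : Function.Exact f g)
    {N N' : Submodule R M} (hN : N' ≤ N) :
    Module.support R (N ⧸ N'.comap N.subtype) =
      Module.support R (N.comap f ⧸ (N'.comap f).comap (N.comap f).subtype) ∪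
        Module.support R (N.map g ⧸ (N'.map g).comap (N.map g).subtype) := by
  set φ := f.restrict (p := N.comap f) (q := N) fun _ hx => hx
  set ψ := g.restrict (p := N) (q := N.map g) fun _ hx => mem_map_of_mem hx
  set α := mapQ ((N'.comap f).comap (N.comap f).subtype) (N'.comap N.subtype) φ le_rfl
  set β := mapQ (N'.comap N.subtype) ((N'.map g).comap (N.map g).subtype) ψ
    fun _ hx => mem_map_of_mem hx
  have hα : Function.Injective α := by
    refine (injective_iff_map_eq_zero α).mpr ?_
    rintro ⟨x⟩ hx
    exact (Quotient.mk_eq_zero _).mpr ((Quotient.mk_eq_zero (N'.comap N.subtype)).mp hx)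
  have hβ : Function.Surjective β := by
    intro b
    obtain ⟨⟨_, x, hx, rfl⟩, rfl⟩ := mkQ_surjective _ b
    exact ⟨mkQ _ ⟨x, hx⟩, rfl⟩
  have hαβ : Function.Exact α β := by
    refine ((hfg.restrict_comap_map N).exact_mapQ_iff _ _).mpr ?_
    rintro y ⟨-, ⟨z, hz, hzy⟩⟩
    exact ⟨⟨z, hN hz⟩, hz, Subtype.ext hzy⟩
  exact Module.support_of_exact hαβ hα hβ

theorem inClassZ_of_extension_general
    (R : Type u) [CommRing R]
    (M' M M'' : Type u) [AddCommGroup M'] [Module R M'] [AddCommGroup M] [Module R M]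
    [AddCommGroup M''] [Module R M'']
    (f : M' →ₗ[R] M) (g : M →ₗ[R] M'')
    (hfg : LinearMap.range f = LinearMap.ker g)
    (h' : InClassZ R M') (h'' : InClassZ R M'') :
    InClassZ R M := by
  have hexact : Function.Exact f g := LinearMap.exact_iff.mpr hfg.symm
  intro N hN
  obtain ⟨n', hn'⟩ := h' (fun i => (N i).comap f) fun i => comap_mono (hN i)
  obtain ⟨n'', hn''⟩ := h'' (fun i => (N i).map g) fun i => map_mono (hN i)
  refine ⟨max n' n'', fun i hi p hp => ?_⟩
  rw [Module.support_subquotient_of_exact hexact (hN i)] at hp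
  exact hp.elim (hn' i (le_of_max_le_left hi) p) (hn'' i (le_of_max_le_right hi) p)

/-- The class  is closed under extensions: if  is exact and both
 and  are in the class , then so is . -/
theorem inClassZ_of_extension
    (R : Type u) [CommRing R] [IsNoetherianRing R]
    (M' M M'' : Type u) [AddCommGroup M'] [Module R M'] [AddCommGroup M] [Module R M]
    [AddCommGroup M''] [Module R M'']
    (f : M' →ₗ[R] M) (g : M →ₗ[R] M'')
    (hf : Function.Injective f) (hg : Function.Surjective g)
    (hfg : LinearMap.range f = LinearMap.ker g)
    (h' : InClassZ R M') (h'' : InClassZ R M'') :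
    InClassZ R M :=
  inClassZ_of_extension_general R M' M M'' f g hfg h' h''
end

section
/- Let R be a commutative noetherian ring and M an R-module belonging to the class Z. Then every submodule of M belongs to the class Z, and every quotient module of M belongs to the class Z. -/
/-!
A descending chain in a submodule `K ≤ M` pushes forward to a chain in `M`, and a descending
chain in `M ⧸ K` pulls back to a chain in `M`; in both cases each successive quotient of the
new chain maps onto, or contains, the corresponding successive quotient of the old one, so its
support is at least as large. The condition defining the class `Z` therefore transfers back.
-/

universe u

open Submodule

section

variable {R M N : Type*} [CommRing R] [AddCommGroup M] [Module R M] [AddCommGroup N] [Module R N]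

theorem Module.support_subquotient_map_subset (f : M →ₗ[R] N) (A B : Submodule R M) :
    Module.support R (↥(A.map f) ⧸ (B.map f).comap (A.map f).subtype) ⊆
      Module.support R (↥A ⧸ B.comap A.subtype) := by
  refine Module.support_subset_of_surjective
    (mapQ _ _ (f.submoduleMap A) (by intro x hx; exact mem_map_of_mem hx)) ?_
  intro y
  obtain ⟨⟨_, a, ha, rfl⟩, rfl⟩ := mkQ_surjective _ y
  exact ⟨mkQ _ ⟨a, ha⟩, rfl⟩

theorem Module.support_subquotient_comap_subset (f : M →ₗ[R] N) (A B : Submodule R N) :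
    Module.support R (↥(A.comap f) ⧸ (B.comap f).comap (A.comap f).subtype) ⊆
      Module.support R (↥A ⧸ B.comap A.subtype) := by
  refine Module.support_subset_of_injective
    (mapQ _ _ (f.restrict fun _ hx ↦ hx) (by intro x hx; exact hx)) ?_
  intro x y hxy
  obtain ⟨x, rfl⟩ := mkQ_surjective _ x
  obtain ⟨y, rfl⟩ := mkQ_surjective _ y
  have hdiff := (Submodule.Quotient.eq _).mp hxy
  refine (Submodule.Quotient.eq _).mpr ?_
  simpa using hdiff

end

theorem InClassZ.of_support_subset {R : Type u} [CommRing R] {M N : Type u}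
    [AddCommGroup M] [Module R M] [AddCommGroup N] [Module R N] (hM : InClassZ R M)
    (Φ : Submodule R N → Submodule R M) (hΦ : Monotone Φ)
    (hsupp : ∀ A B : Submodule R N, Module.support R (↥A ⧸ B.comap A.subtype) ⊆
      Module.support R (↥(Φ A) ⧸ (Φ B).comap (Φ A).subtype)) :
    InClassZ R N := by
  intro C hC
  obtain ⟨n, hn⟩ := hM (Φ ∘ C) fun i ↦ hΦ (hC i)
  exact ⟨n, fun i hi p hp ↦ hn i hi p (hsupp _ _ hp)⟩

theorem inClassZ_submodule_and_quotient_general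
    (R : Type u) [CommRing R]
    (M : Type u) [AddCommGroup M] [Module R M] (h : InClassZ R M) :
    (∀ N : Submodule R M, InClassZ R ↥N) ∧ (∀ N : Submodule R M, InClassZ R (M ⧸ N)) := by
  constructor
  · intro K
    refine h.of_support_subset (map K.subtype) (fun _ _ ↦ map_mono) fun A B ↦ ?_
    have key :=
      Module.support_subquotient_comap_subset K.subtype (A.map K.subtype) (B.map K.subtype)
    rwa [comap_map_eq_of_injective K.injective_subtype,
      comap_map_eq_of_injective K.injective_subtype] at key
  · intro K
    refine h.of_support_subset (comap K.mkQ) (fun _ _ ↦ comap_mono) fun A B ↦ ?_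
    have key := Module.support_subquotient_map_subset K.mkQ (A.comap K.mkQ) (B.comap K.mkQ)
    rwa [map_comap_eq_of_surjective K.mkQ_surjective,
      map_comap_eq_of_surjective K.mkQ_surjective] at key

/-- The class  is closed under submodules and quotients. -/
theorem inClassZ_submodule_and_quotient
    (R : Type u) [CommRing R] [IsNoetherianRing R]
    (M : Type u) [AddCommGroup M] [Module R M] (h : InClassZ R M) :
    (∀ N : Submodule R M, InClassZ R ↥N) ∧ (∀ N : Submodule R M, InClassZ R (M ⧸ N)) :=
  inClassZ_submodule_and_quotient_general R M h
end

section
/- Let R be a commutative noetherian ring, M an arbitrary R-module and N a finitely generated R-module. Then Att_R(M ⊗_R N) = Att_R(M) ∩ Supp_R(N); that is, for every prime ideal p of R: the annihilator of (M ⊗_R N)/p(M ⊗_R N) equals p if and only if the annihilator of M/pM equals p and p ∈ Supp_R(N). -/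
/-!
`(M ⊗ N)/p(M ⊗ N) ≅ (M/pM) ⊗ N`, and the annihilator of a tensor product contains the annihilators
of both factors; this gives `⊆` at once. For `⊇`, since `p ∈ Supp N` and `N` is finite, a nonzero
`κ(p)`-linear functional on `κ(p) ⊗ N` yields, after clearing denominators, a nonzero `φ : N → R/p`.
Through the map `(M/pM) ⊗ N → M/pM`, `m ⊗ n ↦ φ(n) • m`, if `a` kills `(M/pM) ⊗ N` and `φ(n) ≠ 0`,
then `a φ(n)` kills `M/pM`, whose annihilator is the prime `p`; hence `a ∈ p`.
-/

universe u

/-- A prime `p` is attached to `M` if `Ann_R(M/pM) = p`. -/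
def IsAttachedPrime (R : Type u) [CommRing R] (M : Type u) [AddCommGroup M] [Module R M]
    (p : Ideal R) : Prop :=
  Module.annihilator R (M ⧸ (p • (⊤ : Submodule R M))) = p

/-- A prime `p` is coassociated to `M` if `p = Ann_R(M/N)` for some submodule `N ⊆ M`
with `M/N` artinian. -/
def IsCoassociatedPrime (R : Type u) [CommRing R] (M : Type u) [AddCommGroup M] [Module R M]
    (p : Ideal R) : Prop :=
  ∃ N : Submodule R M, IsArtinian R (M ⧸ N) ∧ Module.annihilator R (M ⧸ N) = p

open TensorProduct

theorem IsFractionRing.exists_linearMap_comp_eq_smul {R S K N : Type*} [CommRing R] [CommRing S]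
    [CommRing K] [Algebra R S] [Algebra S K] [Algebra R K] [IsScalarTower R S K]
    [IsFractionRing S K] [AddCommGroup N] [Module R N] [Module.Finite R N] (g : N →ₗ[R] K) :
    ∃ (ψ : N →ₗ[R] S) (b : nonZeroDivisors S),
      (IsScalarTower.toAlgHom R S K).toLinearMap ∘ₗ ψ = (b : S) • g := by
  obtain ⟨s, hs⟩ := Module.Finite.fg_top (R := R) (M := N)
  obtain ⟨b, hb⟩ := IsLocalization.exist_integer_multiples (nonZeroDivisors S) s g
  let ι := (IsScalarTower.toAlgHom R S K).toLinearMap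
  have hrange : LinearMap.range ((b : S) • g) ≤ LinearMap.range ι := by
    rw [LinearMap.range_eq_map, ← hs, Submodule.map_span, Submodule.span_le]
    rintro _ ⟨x, hx, rfl⟩
    exact hb x hx
  have hι : Function.Injective ι := IsFractionRing.injective S K
  refine ⟨(LinearEquiv.ofInjective ι hι).symm.toLinearMap ∘ₗ
    ((b : S) • g).codRestrict _ fun n => hrange (LinearMap.mem_range_self _ n), b, ?_⟩
  ext n
  exact LinearEquiv.ofInjective_symm_apply (h := hι) _ _

namespace Module

variable {R : Type*} [CommRing R] {A N : Type*} [AddCommGroup A] [Module R A] [AddCommGroup N]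
  [Module R N]

theorem exists_linearMap_residueField_ne_zero_of_mem_support [Module.Finite R N]
    {p : PrimeSpectrum R} (hp : p ∈ support R N) : ∃ g : N →ₗ[R] p.asIdeal.ResidueField, g ≠ 0 := by
  have := (mem_support_iff_nontrivial_residueField_tensorProduct p).1 hp
  obtain ⟨x, hx⟩ := exists_ne (0 : p.asIdeal.ResidueField ⊗[R] N)
  obtain ⟨f, hf⟩ := Projective.exists_dual_ne_zero p.asIdeal.ResidueField hx
  refine ⟨(LinearMap.liftBaseChangeEquiv p.asIdeal.ResidueField).symm f, ?_⟩
  rw [Ne, LinearEquiv.map_eq_zero_iff]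
  exact fun h => hf (by rw [h, LinearMap.zero_apply])

theorem exists_linearMap_quotient_ne_zero_of_mem_support [Module.Finite R N] {p : PrimeSpectrum R}
    (hp : p ∈ support R N) : ∃ φ : N →ₗ[R] R ⧸ p.asIdeal, φ ≠ 0 := by
  obtain ⟨g, hg⟩ := exists_linearMap_residueField_ne_zero_of_mem_support hp
  obtain ⟨ψ, b, hψ⟩ := IsFractionRing.exists_linearMap_comp_eq_smul (S := R ⧸ p.asIdeal) g
  refine ⟨ψ, fun h => hg ?_⟩
  rw [h, LinearMap.comp_zero] at hψ
  ext n
  have hn := congr($hψ n)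
  rw [LinearMap.zero_apply, LinearMap.smul_apply, eq_comm, smul_eq_zero] at hn
  exact hn.resolve_left (nonZeroDivisors.ne_zero b.2)

theorem le_annihilator_quotient_smul_top (I : Ideal R) :
    I ≤ annihilator R (A ⧸ (I • ⊤ : Submodule R A)) := by
  rw [Submodule.annihilator_quotient]
  exact fun r hr => Submodule.mem_colon.2 fun m _ => Submodule.smul_mem_smul hr trivial

theorem annihilator_quotient_smul_top_tensorProduct (I : Ideal R) :
    annihilator R ((A ⊗[R] N) ⧸ (I • ⊤ : Submodule R (A ⊗[R] N))) =
      annihilator R ((A ⧸ (I • ⊤ : Submodule R A)) ⊗[R] N) :=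
  ((quotTensorEquivQuotSMul (A ⊗[R] N) I).symm ≪≫ₗ (TensorProduct.assoc R (R ⧸ I) A N).symm
    ≪≫ₗ TensorProduct.congr (quotTensorEquivQuotSMul A I) (LinearEquiv.refl R N)).annihilator_eq

theorem annihilator_le_annihilator_tensorProduct_left :
    annihilator R A ≤ annihilator R (A ⊗[R] N) := fun a ha => by
  refine mem_annihilator.2 fun x => ?_
  induction x using TensorProduct.induction_on with
  | zero => exact smul_zero a
  | tmul m n => rw [smul_tmul', mem_annihilator.1 ha, zero_tmul]
  | add x y hx hy => rw [smul_add, hx, hy, add_zero]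

theorem annihilator_le_annihilator_tensorProduct_right :
    annihilator R N ≤ annihilator R (A ⊗[R] N) := fun a ha => by
  refine mem_annihilator.2 fun x => ?_
  induction x using TensorProduct.induction_on with
  | zero => exact smul_zero a
  | tmul m n => rw [smul_tmul', smul_tmul, mem_annihilator.1 ha, tmul_zero]
  | add x y hx hy => rw [smul_add, hx, hy, add_zero]

theorem smul_mem_annihilator_of_mem_annihilator_tensorProduct {S : Type*} [CommRing S]
    [Algebra R S] [Module S A] [IsScalarTower R S A] (φ : N →ₗ[R] S) {a : R}
    (ha : a ∈ annihilator R (A ⊗[R] N)) (n : N) : a • φ n ∈ annihilator S A := by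
  let θ : A ⊗[R] N →ₗ[R] A := lift ((Algebra.lsmul R R A).toLinearMap ∘ₗ φ).flip
  refine mem_annihilator.2 fun m => ?_
  calc (a • φ n) • m = θ (a • m ⊗ₜ n) := by simp [θ, smul_assoc]
    _ = 0 := by rw [mem_annihilator.1 ha, map_zero]

theorem annihilator_tensorProduct_le_of_linearMap_quotient_ne_zero {p : Ideal R} [p.IsPrime]
    [Module (R ⧸ p) A] [IsScalarTower R (R ⧸ p) A] (hA : annihilator R A ≤ p)
    (φ : N →ₗ[R] R ⧸ p) (hφ : φ ≠ 0) : annihilator R (A ⊗[R] N) ≤ p := by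
  intro a ha
  obtain ⟨n, hn⟩ := DFunLike.ne_iff.1 hφ
  obtain ⟨x, hx⟩ := Ideal.Quotient.mk_surjective (φ n)
  have hax : a * x ∈ annihilator R A := by
    rw [← comap_annihilator (R := R ⧸ p), Ideal.mem_comap, map_mul, ← Algebra.smul_def,
      Ideal.Quotient.algebraMap_eq, hx]
    exact smul_mem_annihilator_of_mem_annihilator_tensorProduct φ ha n
  refine (‹p.IsPrime›.mem_or_mem (hA hax)).resolve_right fun hxp => hn ?_
  rw [← hx, LinearMap.zero_apply, Ideal.Quotient.eq_zero_iff_mem]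
  exact hxp

end Module

theorem isAttachedPrime_iff_annihilator_le {R M : Type u} [CommRing R] [AddCommGroup M]
    [Module R M] {p : Ideal R} :
    IsAttachedPrime R M p ↔ Module.annihilator R (M ⧸ (p • ⊤ : Submodule R M)) ≤ p :=
  ⟨le_of_eq, fun h => h.antisymm (Module.le_annihilator_quotient_smul_top (A := M) p)⟩

open TensorProduct in
theorem isAttachedPrime_tensor_iff_general
    (R : Type u) [CommRing R]
    (M N : Type u) [AddCommGroup M] [Module R M] [AddCommGroup N] [Module R N]
    [Module.Finite R N] (p : PrimeSpectrum R) :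
    IsAttachedPrime R (M ⊗[R] N) p.asIdeal ↔
      (IsAttachedPrime R M p.asIdeal ∧ p ∈ Module.support R N) := by
  rw [isAttachedPrime_iff_annihilator_le, isAttachedPrime_iff_annihilator_le,
    Module.annihilator_quotient_smul_top_tensorProduct]
  constructor
  · intro h
    refine ⟨Module.annihilator_le_annihilator_tensorProduct_left.trans h, ?_⟩
    exact Module.mem_support_iff_of_finite.2
      (Module.annihilator_le_annihilator_tensorProduct_right.trans h)
  · rintro ⟨hM, hN⟩
    obtain ⟨φ, hφ⟩ := Module.exists_linearMap_quotient_ne_zero_of_mem_support hN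
    exact Module.annihilator_tensorProduct_le_of_linearMap_quotient_ne_zero hM φ hφ

open TensorProduct in
/-- For an arbitrary module `M` and a finitely generated module `N` over a noetherian ring,
`Att_R(M ⊗_R N) = Att_R(M) ∩ Supp_R(N)`. -/
theorem isAttachedPrime_tensor_iff
    (R : Type u) [CommRing R] [IsNoetherianRing R]
    (M N : Type u) [AddCommGroup M] [Module R M] [AddCommGroup N] [Module R N]
    [Module.Finite R N] (p : PrimeSpectrum R) :
    IsAttachedPrime R (M ⊗[R] N) p.asIdeal ↔
      (IsAttachedPrime R M p.asIdeal ∧ p ∈ Module.support R N) :=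
  isAttachedPrime_tensor_iff_general R M N p
end

section
/- Let R be a commutative noetherian integral domain with field of fractions K, let M be an R-module with Ann_R(M) = 0, and let N be a finitely generated R-module with N ⊗_R K ≠ 0. Then Ann_R(M ⊗_R N) = 0. -/
open TensorProduct
open scoped nonZeroDivisors

universe u

/-! A finitely generated `R`-module `N` with `N ⊗[R] K ≠ 0` has a functional `φ : N → R` that
does not vanish at some `n`: restrict a nonzero `K`-linear functional on `K ⊗[R] N` to `N` and
clear the finitely many denominators. Contracting `M ⊗[R] N → M` along `φ` turns
`r • (m ⊗ₜ n) = 0` into `(r * φ n) • m = 0`, so `r * φ n ∈ Ann M = 0`, whence `r = 0`. -/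

theorem LinearMap.exists_algebraMap_comp_eq_smul {R K N : Type*} [CommRing R] [CommRing K]
    [Algebra R K] [IsFractionRing R K] [AddCommGroup N] [Module R N] [Module.Finite R N]
    (g : N →ₗ[R] K) :
    ∃ (φ : Module.Dual R N) (d : R⁰), Algebra.linearMap R K ∘ₗ φ = (d : R) • g := by
  obtain ⟨d, hd, hint⟩ := FractionalIdeal.isFractional_of_fg (S := R⁰)
    (LinearMap.range_eq_map g ▸ Module.Finite.fg_top.map g)
  have hrange (n : N) : ((d : R) • g) n ∈ LinearMap.range (Algebra.linearMap R K) :=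
    hint _ ⟨n, rfl⟩
  let e := LinearEquiv.ofInjective (Algebra.linearMap R K) (IsFractionRing.injective R K)
  refine ⟨e.symm ∘ₗ ((d : R) • g).codRestrict _ hrange, ⟨d, hd⟩, ?_⟩
  ext n
  exact congrArg Subtype.val (e.apply_symm_apply _)

theorem Module.Finite.exists_dual_apply_ne_zero {R K N : Type*} [CommRing R] [Field K]
    [Algebra R K] [IsFractionRing R K] [AddCommGroup N] [Module R N] [Module.Finite R N]
    (hN : Nontrivial (N ⊗[R] K)) : ∃ (φ : Module.Dual R N) (n : N), φ n ≠ 0 := by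
  have : Nontrivial (K ⊗[R] N) := (TensorProduct.comm R K N).nontrivial
  obtain ⟨ψ, hψ⟩ := exists_ne (0 : Module.Dual K (K ⊗[R] N))
  set g := (LinearMap.liftBaseChangeEquiv K).symm ψ
  obtain ⟨n, hn⟩ : ∃ n, g n ≠ 0 := by
    by_contra! h
    exact hψ ((LinearMap.liftBaseChangeEquiv K).symm.map_eq_zero_iff.mp (LinearMap.ext h))
  obtain ⟨φ, d, hφ⟩ := LinearMap.exists_algebraMap_comp_eq_smul g
  have : Nontrivial R := (algebraMap R K).domain_nontrivial
  have hd : algebraMap R K d ≠ 0 := IsFractionRing.to_map_ne_zero_of_mem_nonZeroDivisors d.2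
  refine ⟨φ, n, fun h => mul_ne_zero hd hn ?_⟩
  rw [← Algebra.smul_def, ← LinearMap.smul_apply, ← hφ, LinearMap.comp_apply, h, map_zero]

theorem Module.mul_mem_annihilator_of_mem_annihilator_tensorProduct {R M N : Type*} [CommRing R]
    [AddCommGroup M] [Module R M] [AddCommGroup N] [Module R N] {r : R}
    (hr : r ∈ Module.annihilator R (M ⊗[R] N)) (φ : Module.Dual R N) (n : N) :
    r * φ n ∈ Module.annihilator R M := by
  refine Module.mem_annihilator.mpr fun m => ?_
  have hcontract := congrArg ((TensorProduct.rid R M).toLinearMap ∘ₗ φ.lTensor M)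
    (Module.mem_annihilator.mp hr (m ⊗ₜ n))
  simpa [mul_smul, smul_comm r] using hcontract

theorem annihilator_tensor_eq_bot_general
    (R : Type u) [CommRing R] [IsDomain R]
    (M N : Type u) [AddCommGroup M] [Module R M] [AddCommGroup N] [Module R N]
    [Module.Finite R N]
    (hM : Module.annihilator R M = ⊥)
    (hN : Nontrivial (N ⊗[R] (FractionRing R))) :
    Module.annihilator R (M ⊗[R] N) = ⊥ := by
  obtain ⟨φ, n, hφn⟩ := Module.Finite.exists_dual_apply_ne_zero hN
  refine (Submodule.eq_bot_iff _).mpr fun r hr => ?_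
  have hrφ := Module.mul_mem_annihilator_of_mem_annihilator_tensorProduct hr φ n
  rw [hM, Submodule.mem_bot] at hrφ
  exact (mul_eq_zero.mp hrφ).resolve_right hφn

/-- Let `R` be a noetherian domain with fraction field `K`, `M` a faithful `R`-module and `N`
a finitely generated `R`-module with `N ⊗_R K ≠ 0`.  Then `M ⊗_R N` is faithful. -/
theorem annihilator_tensor_eq_bot
    (R : Type u) [CommRing R] [IsDomain R] [IsNoetherianRing R]
    (M N : Type u) [AddCommGroup M] [Module R M] [AddCommGroup N] [Module R N]
    [Module.Finite R N]
    (hM : Module.annihilator R M = ⊥)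
    (hN : Nontrivial (N ⊗[R] (FractionRing R))) :
    Module.annihilator R (M ⊗[R] N) = ⊥ :=
  annihilator_tensor_eq_bot_general R M N hM hN
end
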